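/- For all m, n ≥ 0 and all x, y ∈ CC_{m+n}, the splitting map is multiplicative for ⋆: Δ_{m,n}(x ⋆ y) = (⋆ ⊗ ⋆)∘(id_{CC_m} ⊗ τ ⊗ id_{CC_n})(Δ_{m,n}(x) ⊗ Δ_{m,n}(y)), where τ : CC_n ⊗ CC_m → CC_m ⊗ CC_n is the flip; that is, Δ_{m,n} is multiplicative for the componentwise product on CC_m ⊗ CC_n. Moreover, for x, y ∈ CC_0 the evaluation map ε : CC_0 → k, ε(φ⊗v) = φ(v), satisfies ε(x ⋆ y) = ε(x)·ε(y) and ε(1_0) = 1. -/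

import Mathlib

/-!
STATEMENT 5: For all `m, n ≥ 0` and `x, y ∈ CC_{m+n}`, the splitting map is
multiplicative for `⋆`:
`Δ_{m,n}(x ⋆ y) = (⋆ ⊗ ⋆)∘(id ⊗ τ ⊗ id)(Δ_{m,n}(x) ⊗ Δ_{m,n}(y))`, i.e.
`Δ_{m,n}` is multiplicative for the componentwise product on `CC_m ⊗ CC_n`.
Moreover the evaluation map `ε : CC_0 → k` satisfies `ε(x ⋆ y) = ε(x)·ε(y)`
and `ε(1₀) = 1`.
-/

open CategoryTheory TensorProduct MonoidalCategory

noncomputable section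

namespace Tannaka

variable {k : Type} [Field k] {A : Type} [SmallCategory A] [DecidableEq A]
  [Preadditive A] [CategoryTheory.Linear k A]
  [MonoidalCategory A] [MonoidalPreadditive A] [MonoidalLinear k A]
variable (ω : A ⥤ ModuleCat k) [ω.Additive] [Functor.Linear k ω] [ω.Monoidal]

/-- The chain `Hom(X₁,X₀) ⊗ Hom(X₂,X₁) ⊗ ⋯ ⊗ Hom(Xₙ,Xₙ₋₁)` of a tuple of
objects, as a tensor product over `k` of the `Hom`-spaces. -/
abbrev Chain (n : ℕ) (X : Fin (n+1) → A) : Type :=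
  ⨂[k] (i : Fin n), (X ⟨i.1+1, Nat.succ_lt_succ i.2⟩ ⟶ X ⟨i.1, Nat.lt_succ_of_lt i.2⟩)

/-- The summand `ω(X₀)^∨ ⊗ Hom(X₁,X₀) ⊗ ⋯ ⊗ Hom(Xₙ,Xₙ₋₁) ⊗ ω(Xₙ)` of the
Hochschild module, indexed by a tuple of objects. -/
abbrev Summand (n : ℕ) (X : Fin (n+1) → A) : Type :=
  Module.Dual k (ω.obj (X ⟨0, Nat.succ_pos n⟩)) ⊗[k]
    ((Chain (k := k) n X) ⊗[k] (ω.obj (X ⟨n, Nat.lt_succ_self n⟩)))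

/-- `CC ω n = CC_n(𝒜, ω^∨⊗ω)`, the `n`-th term of the Hochschild simplicial
vector space: the direct sum over all `(n+1)`-tuples of objects of the
corresponding summands. -/
abbrev CC (n : ℕ) : Type := DirectSum (Fin (n+1) → A) (Summand ω n)

/-- The pure tensor `φ ⊗ a₁ ⊗ ⋯ ⊗ aₙ ⊗ v` in `CC ω n`. -/
def mk (n : ℕ) (X : Fin (n+1) → A) (φ : Module.Dual k (ω.obj (X ⟨0, Nat.succ_pos n⟩)))
    (a : ∀ i : Fin n, X ⟨i.1+1, Nat.succ_lt_succ i.2⟩ ⟶ X ⟨i.1, Nat.lt_succ_of_lt i.2⟩)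
    (v : ω.obj (X ⟨n, Nat.lt_succ_self n⟩)) : CC ω n :=
  DirectSum.lof k _ (Summand ω n) X (φ ⊗ₜ ((PiTensorProduct.tprod k a) ⊗ₜ v))

/-- Transport of a morphism along equalities of its source and target. -/
def castHom {X Y X' Y' : A} (h1 : X = X') (h2 : Y = Y') (f : X ⟶ Y) : X' ⟶ Y' :=
  eqToHom h1.symm ≫ f ≫ eqToHom h2

/-- `face n i : CC ω (n+1) →ₗ CC ω n` (for `i : Fin (n+2)`) is the family of
Hochschild face maps `∂ᵢ` precisely when it satisfies the following three
defining formulas on pure tensors: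
`∂₀(φ⊗a₁⊗⋯⊗aₙ⊗v) = (φ∘ω(a₁))⊗a₂⊗⋯⊗aₙ⊗v`,
`∂ᵢ(φ⊗a₁⊗⋯⊗aₙ⊗v) = φ⊗a₁⊗⋯⊗(aᵢ∘aᵢ₊₁)⊗⋯⊗aₙ⊗v` for `0 < i < n`, and
`∂ₙ(φ⊗a₁⊗⋯⊗aₙ⊗v) = φ⊗a₁⊗⋯⊗aₙ₋₁⊗ω(aₙ)(v)`.  (Pure tensors span, so these
formulas determine the maps uniquely.) -/
def IsFace (face : ∀ n : ℕ, Fin (n+2) → (CC ω (n+1) →ₗ[k] CC ω n)) : Prop :=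
  (∀ (n : ℕ) (X : Fin (n+2) → A) (φ : Module.Dual k (ω.obj (X ⟨0, Nat.succ_pos (n+1)⟩)))
    (a : ∀ i : Fin (n+1), X ⟨i.1+1, Nat.succ_lt_succ i.2⟩ ⟶ X ⟨i.1, Nat.lt_succ_of_lt i.2⟩)
    (v : ω.obj (X ⟨n+1, Nat.lt_succ_self (n+1)⟩)),
    face n ⟨0, Nat.succ_pos (n+1)⟩ (mk ω (n+1) X φ a v) =
      mk ω n (fun j => X ⟨j.1+1, Nat.succ_lt_succ j.2⟩)
        (φ ∘ₗ (ω.map (a ⟨0, Nat.succ_pos n⟩)).hom)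
        (fun j => a ⟨j.1+1, Nat.succ_lt_succ j.2⟩) v) ∧
  (∀ (n : ℕ) (p : Fin n) (X : Fin (n+2) → A)
    (φ : Module.Dual k (ω.obj (X ⟨0, Nat.succ_pos (n+1)⟩)))
    (a : ∀ i : Fin (n+1), X ⟨i.1+1, Nat.succ_lt_succ i.2⟩ ⟶ X ⟨i.1, Nat.lt_succ_of_lt i.2⟩)
    (v : ω.obj (X ⟨n+1, Nat.lt_succ_self (n+1)⟩)),
    face n ⟨p.1+1, Nat.succ_lt_succ (Nat.lt_succ_of_lt p.2)⟩ (mk ω (n+1) X φ a v) =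
      mk ω n
        (fun l => if l.1 ≤ p.1 then X ⟨l.1, Nat.lt_succ_of_lt l.2⟩
          else X ⟨l.1+1, Nat.succ_lt_succ l.2⟩)
        (φ ∘ₗ (ω.map (eqToHom (by dsimp only; rw [if_pos (Nat.zero_le p.1)]))).hom)
        (fun j =>
          if h : j.1 < p.1 then
            castHom (by dsimp only; rw [if_pos (by omega : j.1+1 ≤ p.1)])
              (by dsimp only; rw [if_pos (by omega : j.1 ≤ p.1)])
              (a ⟨j.1, Nat.lt_succ_of_lt j.2⟩)
          else if h2 : j.1 = p.1 then
            castHom (by dsimp only; rw [if_neg (by omega : ¬ (j.1+1 ≤ p.1))]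
                        exact congrArg X (Fin.ext (by dsimp only; omega)))
              (by dsimp only; rw [if_pos (by omega : j.1 ≤ p.1)]
                  exact congrArg X (Fin.ext (by dsimp only; omega)))
              ((a ⟨p.1+1, Nat.succ_lt_succ p.2⟩) ≫ (a ⟨p.1, Nat.lt_succ_of_lt p.2⟩))
          else
            castHom (by dsimp only; rw [if_neg (by omega : ¬ (j.1+1 ≤ p.1))])
              (by dsimp only; rw [if_neg (by omega : ¬ (j.1 ≤ p.1))])
              (a ⟨j.1+1, Nat.succ_lt_succ j.2⟩))
        ((ω.map (eqToHom (by dsimp only; rw [if_neg (by have := p.2; omega : ¬ (n ≤ p.1))] :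
          X ⟨n+1, Nat.lt_succ_self (n+1)⟩ =
          (fun l : Fin (n+1) => if l.1 ≤ p.1 then X ⟨l.1, Nat.lt_succ_of_lt l.2⟩
            else X ⟨l.1+1, Nat.succ_lt_succ l.2⟩) ⟨n, Nat.lt_succ_self n⟩))) v)) ∧
  (∀ (n : ℕ) (X : Fin (n+2) → A) (φ : Module.Dual k (ω.obj (X ⟨0, Nat.succ_pos (n+1)⟩)))
    (a : ∀ i : Fin (n+1), X ⟨i.1+1, Nat.succ_lt_succ i.2⟩ ⟶ X ⟨i.1, Nat.lt_succ_of_lt i.2⟩)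
    (v : ω.obj (X ⟨n+1, Nat.lt_succ_self (n+1)⟩)),
    face n ⟨n+1, Nat.lt_succ_self (n+1)⟩ (mk ω (n+1) X φ a v) =
      mk ω n (fun j => X ⟨j.1, Nat.lt_succ_of_lt j.2⟩) φ
        (fun j => a ⟨j.1, Nat.lt_succ_of_lt j.2⟩)
        (ω.map (a ⟨n, Nat.lt_succ_self n⟩) v))

/-- `split m n N h : CC ω N →ₗ CC ω m ⊗ CC ω n` (for `m + n = N`) is the family
of splitting maps `Δ_{m,n}` precisely when it satisfies the defining formula
`Δ_{m,n}(φ⊗a₁⊗⋯⊗a_N⊗v) = Σᵢ (φ⊗a₁⊗⋯⊗aₘ⊗eᵢ) ⊗ (eᵢ^∨⊗aₘ₊₁⊗⋯⊗a_N⊗v)` for every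
basis `(eᵢ)` of `ω(Xₘ)` (with dual basis `(eᵢ^∨)`); in particular the maps do
not depend on the choice of basis. -/
def IsSplit
    (split : ∀ (m n N : ℕ), m + n = N → (CC ω N →ₗ[k] (CC ω m ⊗[k] CC ω n))) : Prop :=
  ∀ (m n N : ℕ) (hmn : m + n = N) (X : Fin (N+1) → A)
    (φ : Module.Dual k (ω.obj (X ⟨0, Nat.succ_pos N⟩)))
    (a : ∀ i : Fin N, X ⟨i.1+1, Nat.succ_lt_succ i.2⟩ ⟶ X ⟨i.1, Nat.lt_succ_of_lt i.2⟩)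
    (v : ω.obj (X ⟨N, Nat.lt_succ_self N⟩))
    (ι : Type) (_ : Fintype ι) (b : Module.Basis ι k (ω.obj (X ⟨m, by omega⟩))),
    split m n N hmn (mk ω N X φ a v) =
      ∑ i : ι,
        (mk ω m (fun l => X ⟨l.1, by have := l.2; omega⟩) φ
          (fun l => a ⟨l.1, by have := l.2; omega⟩) (b i)) ⊗ₜ[k]
        (mk ω n (fun l => X ⟨m + l.1, by have := l.2; omega⟩) (b.coord i)
          (fun l => a ⟨m + l.1, by have := l.2; omega⟩)
          (ω.map (eqToHom (congrArg X (Fin.ext (by dsimp only; omega)))) v))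

/-- The total differential `d = Σᵢ (−1)ⁱ ∂ᵢ : CC_{N+1} → CC_N`. -/
def dTot (face : ∀ n : ℕ, Fin (n+2) → (CC ω (n+1) →ₗ[k] CC ω n)) (N : ℕ) :
    CC ω (N+1) →ₗ[k] CC ω N :=
  ∑ i : Fin (N+2), ((-1 : k) ^ (i : ℕ)) • face N i

/-- `star m : CC ω m → CC ω m → CC ω m` is the bilinear product `⋆` precisely
when it satisfies the defining formula on pure tensors:
`(φ⊗a₁⊗⋯⊗aₘ⊗v) ⋆ (φ'⊗a₁'⊗⋯⊗aₘ'⊗v') =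
  ((φ⊗φ')∘μ⁻¹) ⊗ (a₁⊠a₁') ⊗ ⋯ ⊗ (aₘ⊠aₘ') ⊗ μ(v⊗v')`. -/
def IsStar (star : ∀ m : ℕ, CC ω m →ₗ[k] CC ω m →ₗ[k] CC ω m) : Prop :=
  ∀ (m : ℕ) (X X' : Fin (m+1) → A)
    (φ : Module.Dual k (ω.obj (X ⟨0, Nat.succ_pos m⟩)))
    (φ' : Module.Dual k (ω.obj (X' ⟨0, Nat.succ_pos m⟩)))
    (a : ∀ i : Fin m, X ⟨i.1+1, Nat.succ_lt_succ i.2⟩ ⟶ X ⟨i.1, Nat.lt_succ_of_lt i.2⟩)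
    (a' : ∀ i : Fin m, X' ⟨i.1+1, Nat.succ_lt_succ i.2⟩ ⟶ X' ⟨i.1, Nat.lt_succ_of_lt i.2⟩)
    (v : ω.obj (X ⟨m, Nat.lt_succ_self m⟩)) (v' : ω.obj (X' ⟨m, Nat.lt_succ_self m⟩)),
    star m (mk ω m X φ a v) (mk ω m X' φ' a' v') =
      mk ω m (fun j => X j ⊗ X' j)
        ((TensorProduct.lid k k).toLinearMap ∘ₗ TensorProduct.map φ φ' ∘ₗ
          ((Functor.OplaxMonoidal.δ ω (X ⟨0, Nat.succ_pos m⟩) (X' ⟨0, Nat.succ_pos m⟩)).hom :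
            _ →ₗ[k] _))
        (fun i => MonoidalCategory.tensorHom (a i) (a' i))
        (Functor.LaxMonoidal.μ ω (X ⟨m, Nat.lt_succ_self m⟩) (X' ⟨m, Nat.lt_succ_self m⟩)
          (v ⊗ₜ[k] v'))

/-- The unit element `1ₘ = ū ⊗ id_𝟙 ⊗ ⋯ ⊗ id_𝟙 ⊗ u(1) ∈ CC ω m`. -/
def oneCC (m : ℕ) : CC ω m :=
  mk ω m (fun _ => 𝟙_ A) ((Functor.OplaxMonoidal.η ω).hom : ω.obj (𝟙_ A) →ₗ[k] k)
    (fun _ => 𝟙 (𝟙_ A)) (Functor.LaxMonoidal.ε ω (1 : k))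

/-- `ε : CC_0 → k` is the evaluation map `φ⊗v ↦ φ(v)`. -/
def IsCounit (eps : CC ω 0 →ₗ[k] k) : Prop :=
  ∀ (X : Fin 1 → A) (φ : Module.Dual k (ω.obj (X ⟨0, Nat.succ_pos 0⟩)))
    (a : ∀ i : Fin 0, X ⟨i.1+1, Nat.succ_lt_succ i.2⟩ ⟶ X ⟨i.1, Nat.lt_succ_of_lt i.2⟩)
    (v : ω.obj (X ⟨0, Nat.lt_succ_self 0⟩)),
    eps (mk ω 0 X φ a v) = φ v

/-!
All the maps involved are (bi)linear, so it suffices to compare both sides on pure tensors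
`x = φ⊗a⊗v` and `y = φ'⊗a'⊗v'`. Since `Δ_{m,n}` does not depend on the basis, `Δ_{m,n}(x ⋆ y)`
may be computed with the basis `μ(eᵢ ⊗ e'ⱼ)` of `ω(Xₘ ⊠ X'ₘ)`, built from the bases `(eᵢ)`, `(e'ⱼ)`
used for `Δ_{m,n}(x)` and `Δ_{m,n}(y)`. Its dual basis is `(eᵢ^∨ ⊗ e'ⱼ^∨) ∘ μ⁻¹`, and the two
sides then agree term by term. For `ε` one only needs `μ⁻¹ ∘ μ = id` and `ū ∘ u = id`.
-/

theorem _root_.Module.Basis.coord_map {R M M' ι : Type} [CommSemiring R] [AddCommMonoid M]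
    [Module R M] [AddCommMonoid M'] [Module R M'] (b : Module.Basis ι R M) (e : M ≃ₗ[R] M')
    (i : ι) : (b.map e).coord i = b.coord i ∘ₗ e.symm.toLinearMap := by
  ext x
  simp [Module.Basis.coord_apply]

theorem _root_.Module.Basis.tensorProduct_coord {R M N ι κ : Type} [CommSemiring R]
    [AddCommMonoid M] [Module R M] [AddCommMonoid N] [Module R N]
    (b : Module.Basis ι R M) (c : Module.Basis κ R N) (i : ι) (j : κ) :
    (b.tensorProduct c).coord (i, j) =
      (TensorProduct.lid R R).toLinearMap ∘ₗ TensorProduct.map (b.coord i) (c.coord j) := by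
  ext x y
  simp [Module.Basis.tensorProduct_repr_tmul_apply, mul_comm]

theorem _root_.CategoryTheory.Functor.Monoidal.δ_μ_apply {R C : Type} [CommRing R] [Category C]
    [MonoidalCategory C] (F : C ⥤ ModuleCat R) [F.Monoidal] (X Y : C) (v : F.obj X)
    (w : F.obj Y) :
    (Functor.OplaxMonoidal.δ F X Y).hom (Functor.LaxMonoidal.μ F X Y (v ⊗ₜ[R] w)) = v ⊗ₜ w :=
  congr($(Functor.Monoidal.μ_δ F X Y).hom (v ⊗ₜ w))

def tensorBasis {R C : Type} [CommRing R] [Category C] [MonoidalCategory C]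
    (F : C ⥤ ModuleCat R) [F.Monoidal] {X Y : C} {ι ι' : Type}
    (b : Module.Basis ι R (F.obj X)) (b' : Module.Basis ι' R (F.obj Y)) :
    Module.Basis (ι × ι') R (F.obj (X ⊗ Y)) :=
  (b.tensorProduct b').map (Functor.Monoidal.μIso F X Y).toLinearEquiv

theorem tensorBasis_apply {R C : Type} [CommRing R] [Category C] [MonoidalCategory C]
    (F : C ⥤ ModuleCat R) [F.Monoidal] {X Y : C} {ι ι' : Type}
    (b : Module.Basis ι R (F.obj X)) (b' : Module.Basis ι' R (F.obj Y)) (i : ι) (j : ι') :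
    tensorBasis F b b' (i, j) = Functor.LaxMonoidal.μ F X Y (b i ⊗ₜ b' j) := by
  rw [tensorBasis, Module.Basis.map_apply, Module.Basis.tensorProduct_apply]
  rfl

theorem tensorBasis_coord {R C : Type} [CommRing R] [Category C] [MonoidalCategory C]
    (F : C ⥤ ModuleCat R) [F.Monoidal] {X Y : C} {ι ι' : Type}
    (b : Module.Basis ι R (F.obj X)) (b' : Module.Basis ι' R (F.obj Y)) (i : ι) (j : ι') :
    (tensorBasis F b b').coord (i, j) =
      (TensorProduct.lid R R).toLinearMap ∘ₗ TensorProduct.map (b.coord i) (b'.coord j) ∘ₗ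
        (Functor.OplaxMonoidal.δ F X Y).hom := by
  rw [tensorBasis, Module.Basis.coord_map, Module.Basis.tensorProduct_coord]
  rfl

section

variable {ω}

omit [MonoidalPreadditive A] [MonoidalLinear k A] [ω.Additive] [Functor.Linear k ω]

section

omit [MonoidalCategory A] [ω.Monoidal]

theorem CC.linearMap_ext {M : Type} [AddCommMonoid M] [Module k M] {n : ℕ}
    {f g : CC ω n →ₗ[k] M}
    (h : ∀ X φ a v, f (mk ω n X φ a v) = g (mk ω n X φ a v)) : f = g := by
  refine DirectSum.linearMap_ext k fun X => TensorProduct.ext' fun φ t => ?_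
  induction t using TensorProduct.induction_on with
  | zero => simp only [tmul_zero, map_zero]
  | add s t hs ht => simp only [tmul_add, map_add, hs, ht]
  | tmul c v =>
    induction c using PiTensorProduct.induction_on with
    | smul_tprod r a =>
      simp only [LinearMap.comp_apply, ← smul_tmul', tmul_smul, map_smul]
      exact congrArg _ (h X φ a v)
    | add s t hs ht => simp only [add_tmul, tmul_add, map_add, hs, ht]

theorem CC.bilinear_ext {M : Type} [AddCommMonoid M] [Module k M] {n : ℕ}
    {f g : CC ω n →ₗ[k] CC ω n →ₗ[k] M}
    (h : ∀ X φ a v X' φ' a' v',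
      f (mk ω n X φ a v) (mk ω n X' φ' a' v') = g (mk ω n X φ a v) (mk ω n X' φ' a' v')) :
    f = g :=
  CC.linearMap_ext fun X φ a v => CC.linearMap_ext (h X φ a v)

end

theorem split_star [∀ X : A, FiniteDimensional k (ω.obj X)]
    {star : ∀ m : ℕ, CC ω m →ₗ[k] CC ω m →ₗ[k] CC ω m} (hstar : IsStar ω star)
    {split : ∀ (m n N : ℕ), m + n = N → (CC ω N →ₗ[k] (CC ω m ⊗[k] CC ω n))}
    (hsplit : IsSplit ω split) {m n N : ℕ} (h : m + n = N) (x y : CC ω N) :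
    split m n N h (star N x y) =
      (TensorProduct.map (TensorProduct.lift (star m)) (TensorProduct.lift (star n)))
        ((TensorProduct.tensorTensorTensorComm k (CC ω m) (CC ω n) (CC ω m) (CC ω n))
          ((split m n N h x) ⊗ₜ[k] (split m n N h y))) := by
  subst h
  refine LinearMap.congr_fun₂ (f := (star (m + n)).compr₂ (split m n _ rfl))
    (g := ((TensorProduct.mk k _ _).compl₁₂ (split m n _ rfl) (split m n _ rfl)).compr₂
      (TensorProduct.map (TensorProduct.lift (star m)) (TensorProduct.lift (star n)) ∘ₗ
        (TensorProduct.tensorTensorTensorComm k _ _ _ _).toLinearMap))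
    (CC.bilinear_ext fun X φ a v X' φ' a' v' => ?_) x y
  let b := Module.finBasis k (ω.obj (X ⟨m, by omega⟩))
  let b' := Module.finBasis k (ω.obj (X' ⟨m, by omega⟩))
  simp only [LinearMap.compr₂_apply, LinearMap.compl₁₂_apply, TensorProduct.mk_apply,
    LinearMap.comp_apply, LinearEquiv.coe_coe]
  rw [hstar, hsplit _ _ _ _ _ _ _ _ _ inferInstance (tensorBasis ω b b'),
    hsplit _ _ _ _ X φ a v _ inferInstance b, hsplit _ _ _ _ X' φ' a' v' _ inferInstance b']
  simp only [sum_tmul, tmul_sum, map_sum, tensorTensorTensorComm_tmul, TensorProduct.map_tmul,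
    TensorProduct.lift.tmul, Fintype.sum_prod_type, tensorBasis_apply, tensorBasis_coord,
    eqToHom_refl, CategoryTheory.Functor.map_id, ModuleCat.id_apply]
  rw [Finset.sum_comm]
  refine Finset.sum_congr rfl fun j _ => Finset.sum_congr rfl fun i _ => ?_
  rw [hstar, hstar]
  rfl

theorem counit_star {star : ∀ m : ℕ, CC ω m →ₗ[k] CC ω m →ₗ[k] CC ω m} (hstar : IsStar ω star)
    {eps : CC ω 0 →ₗ[k] k} (heps : IsCounit ω eps) (x y : CC ω 0) :
    eps (star 0 x y) = eps x * eps y := by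
  refine LinearMap.congr_fun₂ (f := (star 0).compr₂ eps)
    (g := (LinearMap.mul k k).compl₁₂ eps eps) (CC.bilinear_ext fun X φ a v X' φ' a' v' => ?_) x y
  rw [LinearMap.compr₂_apply, LinearMap.compl₁₂_apply, LinearMap.mul_apply', hstar, heps, heps,
    heps, LinearMap.comp_apply, LinearMap.comp_apply, Functor.Monoidal.δ_μ_apply]
  rfl

theorem counit_oneCC {eps : CC ω 0 →ₗ[k] k} (heps : IsCounit ω eps) : eps (oneCC ω 0) = 1 := by
  rw [oneCC, heps]
  exact congr($(Functor.Monoidal.ε_η (F := ω)).hom 1)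

end

theorem splitting_multiplicative
    [∀ X : A, FiniteDimensional k (ω.obj X)]
    (star : ∀ m : ℕ, CC ω m →ₗ[k] CC ω m →ₗ[k] CC ω m) (hstar : IsStar ω star)
    (split : ∀ (m n N : ℕ), m + n = N → (CC ω N →ₗ[k] (CC ω m ⊗[k] CC ω n)))
    (hsplit : IsSplit ω split)
    (eps : CC ω 0 →ₗ[k] k) (heps : IsCounit ω eps) :
    -- Δ_{m,n} is multiplicative for the componentwise product on CC_m ⊗ CC_n,
    -- i.e. Δ_{m,n}(x⋆y) = (⋆ ⊗ ⋆)∘(id ⊗ τ ⊗ id)(Δ_{m,n}(x) ⊗ Δ_{m,n}(y))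
    (∀ (m n N : ℕ) (h : m + n = N) (x y : CC ω N),
      split m n N h (star N x y) =
        (TensorProduct.map (TensorProduct.lift (star m)) (TensorProduct.lift (star n)))
          ((TensorProduct.tensorTensorTensorComm k (CC ω m) (CC ω n) (CC ω m) (CC ω n))
            ((split m n N h x) ⊗ₜ[k] (split m n N h y)))) ∧
    -- ε is multiplicative and unital
    (∀ x y : CC ω 0, eps (star 0 x y) = eps x * eps y) ∧
    eps (oneCC ω 0) = 1 := by
  exact ⟨fun m n N h x y => split_star hstar hsplit h x y, counit_star hstar heps,
    counit_oneCC heps⟩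

end Tannaka
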